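/- arXiv:2604.06920 — 2 statements merged into one kernel-verified Lean document; each statement's English description precedes it below -/
import Mathlib

section
/- Let V be a finite type with at least k+1 elements and let k ≥ 2. Then the SOS graph of the family O = {o : Finset V | 0 < |o| ≤ k} (the set of output sets of validity-less k-set agreement) is a connected graph. -/
/-- The SOS graph of a family `O` of finite subsets of `V`: vertices are the
elements of `O`, and two vertices are adjacent iff one strictly includes the other. -/
def sosGraph {V : Type*} (O : Set (Finset V)) : SimpleGraph O where
  Adj o o' := (o : Finset V) ⊂ (o' : Finset V) ∨ (o' : Finset V) ⊂ (o : Finset V)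
  symm := ⟨fun _ _ h => h.symm⟩
  loopless := ⟨fun _ h => h.elim (fun h' => ssubset_irrefl _ h') (fun h' => ssubset_irrefl _ h')⟩

/-!
Every output set reaches each of its singletons by one strict inclusion, and two singletons
`{v}`, `{w}` are joined through the pair `{v, w}`, which is an output set because `k ≥ 2`.
-/

section SOSGraph

variable {V : Type*} {O : Set (Finset V)}

theorem sosGraph_reachable_of_subset {o o' : O} (h : (o : Finset V) ⊆ o') :
    (sosGraph O).Reachable o o' := by
  rcases h.eq_or_ssubset with heq | hss
  · rw [Subtype.ext heq]
  · exact SimpleGraph.Adj.reachable (Or.inl hss)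

theorem sosGraph_connected_of_pair_mem [DecidableEq V] [Nonempty V]
    (hne : ∀ o ∈ O, o.Nonempty) (hpair : ∀ v w : V, {v, w} ∈ O) : (sosGraph O).Connected := by
  have hsingleton (v : V) : {v} ∈ O := by simpa using hpair v v
  let single (v : V) : O := ⟨{v}, hsingleton v⟩
  have single_reachable (v w : V) : (sosGraph O).Reachable (single v) (single w) :=
    (sosGraph_reachable_of_subset (o' := ⟨{v, w}, hpair v w⟩) (by simp [single])).trans
      (sosGraph_reachable_of_subset (by simp [single])).symm
  have reachable_single (o : O) : ∃ v, (sosGraph O).Reachable o (single v) := by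
    obtain ⟨v, hv⟩ := hne o o.2
    exact ⟨v, (sosGraph_reachable_of_subset (Finset.singleton_subset_iff.2 hv)).symm⟩
  refine (SimpleGraph.connected_iff _).2 ⟨fun o o' => ?_, ⟨single (Classical.arbitrary V)⟩⟩
  obtain ⟨v, hv⟩ := reachable_single o
  obtain ⟨w, hw⟩ := reachable_single o'
  exact (hv.trans (single_reachable v w)).trans hw.symm

end SOSGraph

/-- For a finite universe `V` with at least `k+1` values and `k ≥ 2`, the SOS graph of
validity-less `k`-set agreement (all nonempty output sets of cardinality at most `k`)
is connected. -/
theorem sosGraph_kSetAgreement_connected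
    {V : Type*} [Fintype V] (k : ℕ) (hk : 2 ≤ k) (hV : k + 1 ≤ Fintype.card V) :
    (sosGraph {o : Finset V | 0 < o.card ∧ o.card ≤ k}).Connected := by
  classical
  have : Nonempty V := Fintype.card_pos_iff.1 (by omega)
  exact sosGraph_connected_of_pair_mem (fun o ho => Finset.card_pos.1 ho.1)
    fun v w => ⟨Finset.card_pos.2 ⟨v, by simp⟩, Finset.card_le_two.trans hk⟩
end

section
/- Let V be a finite type with at least k+1 elements and let k ≥ 1. Then the SOS graph of the family O = {o : Finset V | 0 < |o| ≤ k} is connected if and only if k ≥ 2. (In particular, for k = 1 the graph has at least two vertices and no edges, so it is disconnected.) -/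
/-!
For `k = 1` the family consists of singletons only, an antichain, so the SOS graph has no edges
and at least two vertices. For `k ≥ 2` every set reaches each of its singletons in at most one
step, and two singletons `{x}`, `{y}` are joined through the pair `{x, y}`.
-/

namespace sosGraph

variable {V : Type*} {O : Set (Finset V)}

theorem eq_bot_of_isAntichain (hO : IsAntichain (· ⊆ ·) O) : sosGraph O = ⊥ := by
  ext o o'
  simp only [SimpleGraph.bot_adj, iff_false]
  rintro (h | h)
  · exact hO o.2 o'.2 (ne_of_ssubset h) h.subset
  · exact hO o'.2 o.2 (ne_of_ssubset h) h.subset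

theorem reachable_singleton {x : V} (hx : {x} ∈ O) (o : O) (hxo : x ∈ (o : Finset V)) :
    (sosGraph O).Reachable o ⟨{x}, hx⟩ := by
  by_cases ho : (o : Finset V) = {x}
  · rw [show o = ⟨{x}, hx⟩ from Subtype.ext ho]
  · exact SimpleGraph.Adj.reachable <| Or.inr <|
      (Finset.singleton_subset_iff.mpr hxo).ssubset_of_ne (Ne.symm ho)

theorem preconnected_of_pair_mem [DecidableEq V] (hempty : ∅ ∉ O)
    (hpair : ∀ x y : V, {x, y} ∈ O) : (sosGraph O).Preconnected := by
  have hsingleton (x : V) : {x} ∈ O := by simpa using hpair x x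
  intro o o'
  obtain ⟨x, hx⟩ := Finset.nonempty_iff_ne_empty.mpr (ne_of_mem_of_not_mem o.2 hempty)
  obtain ⟨y, hy⟩ := Finset.nonempty_iff_ne_empty.mpr (ne_of_mem_of_not_mem o'.2 hempty)
  have hxy : (sosGraph O).Reachable ⟨{x}, hsingleton x⟩ ⟨{y}, hsingleton y⟩ :=
    (reachable_singleton _ ⟨{x, y}, hpair x y⟩ (by simp)).symm.trans
      (reachable_singleton _ ⟨{x, y}, hpair x y⟩ (by simp))
  exact (reachable_singleton _ o hx).trans (hxy.trans (reachable_singleton _ o' hy).symm)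

end sosGraph

theorem sosGraph_kSetAgreement_connected_iff_general
    {V : Type*} [Fintype V] (k : ℕ) (hV : k + 1 ≤ Fintype.card V) :
    (sosGraph {o : Finset V | 0 < o.card ∧ o.card ≤ k}).Connected ↔ 2 ≤ k := by
  classical
  set O : Set (Finset V) := {o : Finset V | 0 < o.card ∧ o.card ≤ k}
  constructor
  · intro hconn
    obtain ⟨⟨o, ho_pos, ho_le⟩⟩ := hconn.nonempty
    by_contra! hk
    have hsized : O.Sized 1 := fun s ⟨hpos, hle⟩ => by omega
    obtain ⟨v, w, hvw⟩ := Fintype.exists_pair_of_one_lt_card (by omega : 1 < Fintype.card V)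
    have hsingleton (x : V) : {x} ∈ O := ⟨by simp, by rw [Finset.card_singleton]; omega⟩
    have : Nontrivial O := ⟨⟨{v}, hsingleton v⟩, ⟨{w}, hsingleton w⟩, by simpa using hvw⟩
    exact SimpleGraph.not_connected_bot (sosGraph.eq_bot_of_isAntichain hsized.isAntichain ▸ hconn)
  · intro hk
    obtain ⟨v⟩ : Nonempty V := Fintype.card_pos_iff.mp (by omega)
    have hpair (x y : V) : {x, y} ∈ O := ⟨by simp, Finset.card_le_two.trans hk⟩
    have : Nonempty O := ⟨⟨{v, v}, hpair v v⟩⟩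
    exact ⟨sosGraph.preconnected_of_pair_mem (by simp [O]) hpair⟩

/-- For a finite universe `V` with at least `k+1` values and `k ≥ 1`, the SOS graph of
the family of all nonempty output sets of cardinality at most `k` is connected
if and only if `k ≥ 2`. -/
theorem sosGraph_kSetAgreement_connected_iff
    {V : Type*} [Fintype V] (k : ℕ) (hk : 1 ≤ k) (hV : k + 1 ≤ Fintype.card V) :
    (sosGraph {o : Finset V | 0 < o.card ∧ o.card ≤ k}).Connected ↔ 2 ≤ k :=
  sosGraph_kSetAgreement_connected_iff_general k hV
end
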